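/- The differential equation x''(t) + (1/40)x(t) = (1 + 2cos(3t))/x(t)^{3/2} + e^{2sin(3t)}/x(t)^{3/2} + 10 + cos(3t) has at least one positive (2π/3)-periodic solution, i.e. there exists a twice continuously differentiable function x : ℝ → (0,∞) with x(t + 2π/3) = x(t) for all t that satisfies the equation for all t ∈ ℝ. -/

import Mathlib

/-!
The Green operator `greenOp m T` of `x'' + m² x` on `T`-periodic functions has kernel
`cos (m (t + T/2 - s)) / (2 m sin (m T / 2))` on `[t, t + T]`; it exists when
`sin (m T / 2) ≠ 0` and has norm at most `greenBound m T = T / |2 m sin (m T / 2)|`, which is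
`≤ 41` for `m = √(1/40)`, `T = 2π/3`. Truncating `x` below at `100`, the right-hand side stays
within `2` of the constant `10` and is `1/5000`-Lipschitz in `x`, so `x ↦ greenOp (f (·, x))`
is a contraction on bounded continuous functions. Its fixed point is `T`-periodic by uniqueness,
solves the equation, and satisfies `|x - 10 / m²| = |x - 400| ≤ 82`, so the truncation is never
active.
-/

open Real Function intervalIntegral
open scoped NNReal BoundedContinuousFunction

noncomputable section

def greenOp (m T : ℝ) (w : ℝ → ℝ) (t : ℝ) : ℝ :=
  (∫ s in t..t + T, cos (m * (t + T / 2 - s)) * w s) / (2 * m * sin (m * T / 2))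

def greenDeriv (m T : ℝ) (w : ℝ → ℝ) (t : ℝ) : ℝ :=
  m * (cos (m * (t + T / 2)) * (∫ s in t..t + T, sin (m * s) * w s)
      - sin (m * (t + T / 2)) * ∫ s in t..t + T, cos (m * s) * w s) / (2 * m * sin (m * T / 2))

def greenBound (m T : ℝ) : ℝ := |T| / |2 * m * sin (m * T / 2)|

theorem hasDerivAt_integral_add_const {g : ℝ → ℝ} (hg : Continuous g) (T t : ℝ) :
    HasDerivAt (fun u => ∫ s in u..u + T, g s) (g (t + T) - g t) t := by
  have h : (fun u => ∫ s in u..u + T, g s) =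
      fun u => (∫ s in 0..u + T, g s) - ∫ s in 0..u, g s :=
    funext fun u =>
      (integral_interval_sub_left (hg.intervalIntegrable _ _) (hg.intervalIntegrable _ _)).symm
  rw [h]
  exact (hg.integral_hasStrictDerivAt 0 (t + T)).hasDerivAt.comp_add_const t T |>.sub
    (hg.integral_hasStrictDerivAt 0 t).hasDerivAt

section Green

variable {m T : ℝ} {w v : ℝ → ℝ}

theorem greenOp_eq_cos_add_sin (hw : Continuous w) (t : ℝ) :
    greenOp m T w t =
      (cos (m * (t + T / 2)) * (∫ s in t..t + T, cos (m * s) * w s)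
        + sin (m * (t + T / 2)) * ∫ s in t..t + T, sin (m * s) * w s)
        / (2 * m * sin (m * T / 2)) := by
  rw [greenOp, ← integral_const_mul, ← integral_const_mul, ← integral_add]
  · congr 1
    refine integral_congr fun s _ => ?_
    rw [show m * (t + T / 2 - s) = m * (t + T / 2) - m * s by ring, cos_sub]
    ring
  all_goals exact Continuous.intervalIntegrable (by fun_prop) _ _

theorem continuous_greenOp (hw : Continuous w) : Continuous (greenOp m T w) := by
  have hcos : Continuous fun u => ∫ s in u..u + T, cos (m * s) * w s :=
    Differentiable.continuous fun t =>
      (hasDerivAt_integral_add_const (by fun_prop) T t).differentiableAt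
  have hsin : Continuous fun u => ∫ s in u..u + T, sin (m * s) * w s :=
    Differentiable.continuous fun t =>
      (hasDerivAt_integral_add_const (by fun_prop) T t).differentiableAt
  rw [funext (greenOp_eq_cos_add_sin hw)]
  fun_prop

theorem greenOp_comp_add_right (w : ℝ → ℝ) (a t : ℝ) :
    greenOp m T (fun s => w (s + a)) t = greenOp m T w (t + a) := by
  rw [greenOp, greenOp, show t + a + T = t + T + a by ring, ← integral_comp_add_right]
  congr 1
  refine integral_congr fun s _ => ?_
  ring_nf

theorem greenOp_sub (hw : Continuous w) (hv : Continuous v) (t : ℝ) :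
    greenOp m T (w - v) t = greenOp m T w t - greenOp m T v t := by
  simp only [greenOp]
  rw [div_sub_div_same, ← integral_sub]
  · simp only [Pi.sub_apply, mul_sub]
  all_goals exact Continuous.intervalIntegrable (by fun_prop) _ _

theorem greenOp_const (hs : sin (m * T / 2) ≠ 0) (c t : ℝ) :
    greenOp m T (fun _ => c) t = c / m ^ 2 := by
  have hm : m ≠ 0 := by rintro rfl; simp at hs
  have hF : ∀ s, HasDerivAt (fun s => -(c * sin (m * (t + T / 2 - s)) / m))
      (cos (m * (t + T / 2 - s)) * c) s := fun s => by
    refine ((((hasDerivAt_id s).const_sub (t + T / 2)).const_mul m).sin.const_mul c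
      |>.div_const m |>.neg).congr_deriv ?_
    field_simp
    simp
  rw [greenOp, integral_eq_sub_of_hasDerivAt (fun s _ => hF s)
    (Continuous.intervalIntegrable (by fun_prop) _ _),
    show m * (t + T / 2 - (t + T)) = -(m * T / 2) by ring,
    show m * (t + T / 2 - t) = m * T / 2 by ring, sin_neg]
  field_simp
  ring

theorem abs_greenOp_le {B : ℝ} (hB : ∀ s, |w s| ≤ B) (t : ℝ) :
    |greenOp m T w t| ≤ greenBound m T * B := by
  have hint : |∫ s in t..t + T, cos (m * (t + T / 2 - s)) * w s| ≤ B * |T| := by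
    have := norm_integral_le_of_norm_le_const (a := t) (b := t + T) (C := B)
      (f := fun s => cos (m * (t + T / 2 - s)) * w s) fun s _ => by
        rw [norm_mul, norm_eq_abs, norm_eq_abs]
        exact (mul_le_of_le_one_left (abs_nonneg _) (abs_cos_le_one _)).trans (hB s)
    simpa using this
  rw [greenOp, abs_div, greenBound, div_mul_eq_mul_div, mul_comm |T|]
  exact div_le_div_of_nonneg_right hint (abs_nonneg _)

theorem hasDerivAt_greenOp (hw : Continuous w) (hper : Periodic w T) (t : ℝ) :
    HasDerivAt (greenOp m T w) (greenDeriv m T w t) t := by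
  have ha : HasDerivAt (fun u => m * (u + T / 2)) m t := by
    simpa using ((hasDerivAt_id t).add_const (T / 2)).const_mul m
  have H := ((ha.cos.mul (hasDerivAt_integral_add_const (g := fun s => cos (m * s) * w s)
    (by fun_prop) T t)).add (ha.sin.mul (hasDerivAt_integral_add_const
    (g := fun s => sin (m * s) * w s) (by fun_prop) T t))).div_const (2 * m * sin (m * T / 2))
  rw [funext (greenOp_eq_cos_add_sin hw)]
  refine H.congr_deriv ?_
  rw [greenDeriv, hper t, show m * (t + T) = m * (t + T / 2) + m * T / 2 by ring,
    show m * t = m * (t + T / 2) - m * T / 2 by ring, cos_add, cos_sub, sin_add, sin_sub]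
  ring

theorem hasDerivAt_greenDeriv (hw : Continuous w) (hper : Periodic w T)
    (hs : sin (m * T / 2) ≠ 0) (t : ℝ) :
    HasDerivAt (greenDeriv m T w) (w t - m ^ 2 * greenOp m T w t) t := by
  have hm : m ≠ 0 := by rintro rfl; simp at hs
  have ha : HasDerivAt (fun u => m * (u + T / 2)) m t := by
    simpa using ((hasDerivAt_id t).add_const (T / 2)).const_mul m
  have H := (((ha.cos.mul (hasDerivAt_integral_add_const (g := fun s => sin (m * s) * w s)
    (by fun_prop) T t)).sub (ha.sin.mul (hasDerivAt_integral_add_const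
    (g := fun s => cos (m * s) * w s) (by fun_prop) T t))).const_mul m).div_const
    (2 * m * sin (m * T / 2))
  refine H.congr_deriv ?_
  rw [greenOp_eq_cos_add_sin hw, hper t, show m * (t + T) = m * (t + T / 2) + m * T / 2 by ring,
    show m * t = m * (t + T / 2) - m * T / 2 by ring, cos_add, cos_sub, sin_add, sin_sub]
  set a := m * (t + T / 2)
  set b := m * T / 2
  field_simp
  linear_combination (2 * w t * sin b) * sin_sq_add_cos_sq a

theorem deriv_greenOp (hw : Continuous w) (hper : Periodic w T) :
    deriv (greenOp m T w) = greenDeriv m T w :=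
  funext fun t => (hasDerivAt_greenOp hw hper t).deriv

theorem contDiff_greenOp (hw : Continuous w) (hper : Periodic w T) (hs : sin (m * T / 2) ≠ 0) :
    ContDiff ℝ 2 (greenOp m T w) := by
  rw [show (2 : WithTop ℕ∞) = 1 + 1 by norm_num, contDiff_succ_iff_deriv, deriv_greenOp hw hper,
    contDiff_one_iff_deriv]
  refine ⟨fun t => (hasDerivAt_greenOp hw hper t).differentiableAt, by simp,
    fun t => (hasDerivAt_greenDeriv hw hper hs t).differentiableAt, ?_⟩
  rw [funext fun t => (hasDerivAt_greenDeriv hw hper hs t).deriv]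
  exact hw.sub (continuous_const.mul (continuous_greenOp hw))

theorem deriv_deriv_greenOp_add (hw : Continuous w) (hper : Periodic w T)
    (hs : sin (m * T / 2) ≠ 0) (t : ℝ) :
    deriv (deriv (greenOp m T w)) t + m ^ 2 * greenOp m T w t = w t := by
  rw [deriv_greenOp hw hper, (hasDerivAt_greenDeriv hw hper hs t).deriv]
  ring

end Green

theorem exists_periodic_eq_greenOp {m T B : ℝ} {L : ℝ≥0} {f : ℝ → ℝ → ℝ}
    (hf : Continuous (uncurry f)) (hper : Periodic f T) (hB : ∀ t y, |f t y| ≤ B)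
    (hL : ∀ t, LipschitzWith L (f t)) (hLK : L * greenBound m T < 1) :
    ∃ x : ℝ → ℝ, Continuous x ∧ Periodic x T ∧
      ∀ t, x t = greenOp m T (fun s => f s (x s)) t := by
  have hcomp : ∀ x : ℝ → ℝ, Continuous x → Continuous fun s => f s (x s) :=
    fun x hx => hf.comp (continuous_id.prodMk hx)
  let Φ : (ℝ →ᵇ ℝ) → (ℝ →ᵇ ℝ) := fun x =>
    .ofNormedAddCommGroup (greenOp m T fun s => f s (x s))
      (continuous_greenOp (hcomp x x.continuous)) (greenBound m T * B)
      fun t => abs_greenOp_le (fun s => hB s (x s)) t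
  have hK : 0 ≤ greenBound m T := by unfold greenBound; positivity
  have hLK' : ((L * (greenBound m T).toNNReal : ℝ≥0) : ℝ) = L * greenBound m T := by
    rw [NNReal.coe_mul, Real.coe_toNNReal _ hK]
  have hΦ : ContractingWith (L * (greenBound m T).toNNReal) Φ := by
    refine ⟨NNReal.coe_lt_coe.1 (hLK'.trans_lt hLK), LipschitzWith.of_dist_le_mul fun x y => ?_⟩
    refine (BoundedContinuousFunction.dist_le (by positivity)).2 fun t => ?_
    have hxy : ∀ s, |f s (x s) - f s (y s)| ≤ L * dist x y := fun s =>
      ((hL s).dist_le_mul (x s) (y s)).trans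
        (mul_le_mul_of_nonneg_left (BoundedContinuousFunction.dist_coe_le_dist s) L.2)
    calc dist (Φ x t) (Φ y t)
        = |greenOp m T ((fun s => f s (x s)) - fun s => f s (y s)) t| := by
          rw [greenOp_sub (hcomp x x.continuous) (hcomp y y.continuous), ← Real.dist_eq]; rfl
      _ ≤ greenBound m T * (L * dist x y) := abs_greenOp_le hxy t
      _ = _ := by rw [hLK']; ring
  set x₀ := ContractingWith.fixedPoint Φ hΦ
  have hx₀ : ∀ t, x₀ t = greenOp m T (fun s => f s (x₀ s)) t :=
    fun t => (DFunLike.congr_fun hΦ.fixedPoint_isFixedPt t).symm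
  have hshift : IsFixedPt Φ (x₀.compContinuous (ContinuousMap.addRight T)) := by
    ext t
    change greenOp m T (fun s => f s (x₀ (s + T))) t = x₀ (t + T)
    rw [hx₀ (t + T), ← greenOp_comp_add_right]
    congr 1
    funext s
    rw [hper s]
  refine ⟨x₀, x₀.continuous, fun t => ?_, hx₀⟩
  exact DFunLike.congr_fun (hΦ.fixedPoint_unique' hshift hΦ.fixedPoint_isFixedPt) t

theorem exists_periodic_solution {m T c δ : ℝ} {L : ℝ≥0} {f : ℝ → ℝ → ℝ}
    (hs : sin (m * T / 2) ≠ 0) (hf : Continuous (uncurry f)) (hper : Periodic f T)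
    (hδ : ∀ t y, |f t y - c| ≤ δ) (hL : ∀ t, LipschitzWith L (f t))
    (hLK : L * greenBound m T < 1) :
    ∃ x : ℝ → ℝ, ContDiff ℝ 2 x ∧ Periodic x T ∧
      (∀ t, |x t - c / m ^ 2| ≤ greenBound m T * δ) ∧
      ∀ t, deriv (deriv x) t + m ^ 2 * x t = f t (x t) := by
  have hB : ∀ t y, |f t y| ≤ |c| + δ := fun t y => by
    have := abs_sub_abs_le_abs_sub (f t y) c
    linarith [hδ t y]
  obtain ⟨x, hx, hxper, hfix⟩ := exists_periodic_eq_greenOp hf hper hB hL hLK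
  set w := fun s => f s (x s)
  have hw : Continuous w := hf.comp (continuous_id.prodMk hx)
  have hwper : Periodic w T := fun s => by simp only [w, hper s, hxper s]
  have hxw : x = greenOp m T w := funext hfix
  refine ⟨x, hxw ▸ contDiff_greenOp hw hwper hs, hxper, fun t => ?_, fun t => ?_⟩
  · rw [hfix t, ← greenOp_const hs c t, ← greenOp_sub hw continuous_const]
    exact abs_greenOp_le (fun s => hδ s (x s)) t
  · have := deriv_deriv_greenOp_add hw hwper hs t
    rwa [← hxw] at this

theorem two_mul_sin_half_gt {m T : ℝ} (hm : 0 < m) (hT : 0 < T) :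
    m ^ 2 * T * (1 - (m * T) ^ 2 / 24) < 2 * m * sin (m * T / 2) := by
  have := sin_gt_sub_cube (x := m * T / 2) (by positivity)
  nlinarith

theorem sin_half_pos {m T : ℝ} (hm : 0 < m) (hT : 0 < T) (hmT : (m * T) ^ 2 < 24) :
    0 < sin (m * T / 2) := by
  have : 0 < 1 - (m * T) ^ 2 / 24 := by linarith
  exact pos_of_mul_pos_right ((by positivity : 0 < m ^ 2 * T * (1 - (m * T) ^ 2 / 24)).trans
    (two_mul_sin_half_gt hm hT)) (by positivity)

theorem greenBound_le {m T : ℝ} (hm : 0 < m) (hT : 0 < T) (hmT : (m * T) ^ 2 < 24) :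
    greenBound m T ≤ 1 / (m ^ 2 * (1 - (m * T) ^ 2 / 24)) := by
  have hlt := two_mul_sin_half_gt hm hT
  have hpos : 0 < m ^ 2 * T * (1 - (m * T) ^ 2 / 24) := by
    have : 0 < 1 - (m * T) ^ 2 / 24 := by linarith
    positivity
  rw [greenBound, abs_of_pos hT, abs_of_pos (hpos.trans hlt), div_le_div_iff₀ (hpos.trans hlt)
    (by nlinarith)]
  nlinarith

theorem abs_rpow_neg_sub_rpow_neg_le {a p y z : ℝ} (ha : 0 < a) (hp : 0 ≤ p) (hy : a ≤ y)
    (hz : a ≤ z) : |y ^ (-p) - z ^ (-p)| ≤ p * a ^ (-(p + 1)) * |y - z| := by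
  have hderiv : ∀ u ∈ Set.Ici a, HasDerivWithinAt (fun u : ℝ => u ^ (-p))
      (-p * u ^ (-p - 1)) (Set.Ici a) u := fun u hu =>
    (hasDerivAt_rpow_const (Or.inl (ha.trans_le hu).ne')).hasDerivWithinAt
  have hbound : ∀ u ∈ Set.Ici a, ‖-p * u ^ (-p - 1)‖ ≤ p * a ^ (-(p + 1)) :=
    fun u hu => by
      have hu' : 0 < u := ha.trans_le hu
      rw [norm_mul, norm_neg, norm_of_nonneg hp, norm_of_nonneg (rpow_nonneg hu'.le _),
        show -p - 1 = -(p + 1) by ring]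
      exact mul_le_mul_of_nonneg_left (rpow_le_rpow_of_nonpos ha hu (by linarith)) hp
  simpa [norm_eq_abs] using
    (convex_Ici a).norm_image_sub_le_of_norm_hasDerivWithin_le hderiv hbound hz hy

def forcing (t y : ℝ) : ℝ :=
  (1 + 2 * cos (3 * t) + exp (2 * sin (3 * t))) * max y 100 ^ (-(3 / 2 : ℝ)) + 10 + cos (3 * t)

theorem abs_forcing_coeff_le (t : ℝ) : |1 + 2 * cos (3 * t) + exp (2 * sin (3 * t))| ≤ 11 := by
  have he : exp (2 * sin (3 * t)) ≤ exp 1 ^ 2 := by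
    rw [← exp_nat_mul]; exact exp_le_exp.2 (by push_cast; linarith [sin_le_one (3 * t)])
  have : exp 1 ^ 2 < 8 := by nlinarith [exp_one_lt_d9, exp_pos 1]
  have := exp_pos (2 * sin (3 * t))
  rw [abs_le]
  constructor <;> nlinarith [neg_one_le_cos (3 * t), cos_le_one (3 * t)]

theorem continuous_forcing : Continuous (uncurry forcing) := by
  have hψ : Continuous fun p : ℝ × ℝ => max p.2 100 ^ (-(3 / 2 : ℝ)) :=
    (continuous_snd.max continuous_const).rpow_const fun _ =>
      Or.inl (lt_max_of_lt_right (by norm_num)).ne'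
  show Continuous fun p : ℝ × ℝ => forcing p.1 p.2
  unfold forcing
  fun_prop

theorem periodic_forcing : Periodic forcing (2 * π / 3) := fun t => funext fun y => by
  simp only [forcing, show 3 * (t + 2 * π / 3) = 3 * t + 2 * π by ring, cos_add_two_pi,
    sin_add_two_pi]

theorem abs_forcing_sub_le (t y : ℝ) : |forcing t y - 10| ≤ 2 := by
  have h100 : (100 : ℝ) ^ (-(3 / 2 : ℝ)) = 1 / 1000 := by
    rw [show (100 : ℝ) = 10 ^ (2 : ℝ) by norm_num, ← Real.rpow_mul (by norm_num)]; norm_num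
  have hψ : max y 100 ^ (-(3 / 2 : ℝ)) ≤ 1 / 1000 :=
    h100 ▸ rpow_le_rpow_of_nonpos (by norm_num) (le_max_right y 100) (by norm_num)
  have hψ0 : 0 ≤ max y 100 ^ (-(3 / 2 : ℝ)) := rpow_nonneg (by positivity) _
  have hN := abs_forcing_coeff_le t
  rw [forcing, show ∀ a b c : ℝ, a * b + 10 + c - 10 = a * b + c by intros; ring]
  calc _ ≤ |1 + 2 * cos (3 * t) + exp (2 * sin (3 * t))| * |max y 100 ^ (-(3 / 2 : ℝ))|
        + |cos (3 * t)| := by rw [← abs_mul]; exact abs_add_le _ _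
    _ ≤ 11 * (1 / 1000) + 1 := by
        rw [abs_of_nonneg hψ0]
        gcongr
        exact abs_cos_le_one _
    _ ≤ 2 := by norm_num

theorem lipschitzWith_forcing (t : ℝ) : LipschitzWith (1 / 5000) (forcing t) := by
  refine LipschitzWith.of_dist_le_mul fun y z => ?_
  have h100 : (100 : ℝ) ^ (-(3 / 2 + 1 : ℝ)) = 1 / 100000 := by
    rw [show (100 : ℝ) = 10 ^ (2 : ℝ) by norm_num, ← Real.rpow_mul (by norm_num)]; norm_num
  have hψ := abs_rpow_neg_sub_rpow_neg_le (by norm_num : (0 : ℝ) < 100)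
    (by norm_num : (0 : ℝ) ≤ 3 / 2) (le_max_right y 100) (le_max_right z 100)
  rw [h100] at hψ
  have hN := abs_forcing_coeff_le t
  rw [Real.dist_eq, Real.dist_eq, forcing, forcing,
    show ∀ a b c d e : ℝ, a * b + d + e - (a * c + d + e) = a * (b - c) by intros; ring,
    abs_mul]
  calc _ ≤ 11 * (3 / 2 * (1 / 100000) * |y - z|) := by
        gcongr
        exact hψ.trans (mul_le_mul_of_nonneg_left (abs_max_sub_max_le_abs y z 100) (by norm_num))
    _ ≤ _ := by push_cast; nlinarith [abs_nonneg (y - z)]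

theorem forcing_of_le {y : ℝ} (hy : 100 ≤ y) (t : ℝ) :
    forcing t y = (1 + 2 * cos (3 * t)) / y ^ ((3 : ℝ) / 2)
      + exp (2 * sin (3 * t)) / y ^ ((3 : ℝ) / 2) + 10 + cos (3 * t) := by
  rw [forcing, max_eq_left hy, rpow_neg (by linarith)]
  ring

theorem sin_ne_zero_and_greenBound_le :
    sin (√(1 / 40) * (2 * π / 3) / 2) ≠ 0 ∧ greenBound √(1 / 40) (2 * π / 3) ≤ 41 := by
  have hm : 0 < √(1 / 40) := sqrt_pos.2 (by norm_num)
  have hm2 : √(1 / 40) ^ 2 = 1 / 40 := sq_sqrt (by norm_num)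
  have hT : 0 < 2 * π / 3 := by positivity
  have hmT : (√(1 / 40) * (2 * π / 3)) ^ 2 < 1 / 8 := by
    rw [mul_pow, hm2]; nlinarith [pi_lt_d2, pi_pos]
  constructor
  · exact (sin_half_pos hm hT (by linarith)).ne'
  · refine (greenBound_le hm hT (by linarith)).trans ?_
    rw [hm2, div_le_iff₀ (by nlinarith)]
    nlinarith

end

theorem example_4_3 :
    ∃ x : ℝ → ℝ,
      ContDiff ℝ 2 x ∧ (∀ t, 0 < x t) ∧
      (∀ t, x (t + 2 * Real.pi / 3) = x t) ∧
      ∀ t, deriv (deriv x) t + (1 / 40) * x t =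
        (1 + 2 * Real.cos (3 * t)) / x t ^ ((3 : ℝ) / 2)
          + Real.exp (2 * Real.sin (3 * t)) / x t ^ ((3 : ℝ) / 2)
          + 10 + Real.cos (3 * t) := by
  obtain ⟨hs, hK⟩ := sin_ne_zero_and_greenBound_le
  have hm2 : √(1 / 40) ^ 2 = 1 / 40 := sq_sqrt (by norm_num)
  obtain ⟨x, hx, hxper, hxbd, hode⟩ := exists_periodic_solution hs continuous_forcing
    periodic_forcing abs_forcing_sub_le lipschitzWith_forcing (by push_cast; linarith)
  have hx100 : ∀ t, 100 ≤ x t := fun t => by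
    have := hxbd t
    rw [hm2, abs_le] at this
    nlinarith
  refine ⟨x, hx, fun t => by linarith [hx100 t], hxper, fun t => ?_⟩
  rw [← forcing_of_le (hx100 t), ← hode t, hm2]
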